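/- Let Θ be a threshold function, λ ≥ 0, and P a penalty satisfying condition (constrP) for Θ. Let Y ∈ ℝ^{n×m} and suppose Θ(·;λ) is continuous at every singular value of Y. Then B̂ = Θ^σ(Y;λ) is the UNIQUE global minimizer over B ∈ ℝ^{n×m} of F(B) = ‖Y−B‖_F²/2 + Σ_i P(σ_i(B);λ); that is, any global minimizer B of F satisfies B = B̂. -/

import Mathlib

open Matrix

/-- Squared Frobenius norm of a real matrix. -/
def frobSq {n m : ℕ} (A : Matrix (Fin n) (Fin m) ℝ) : ℝ := ∑ i, ∑ j, A i j ^ 2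

/-- `(U, σ, V)` is a (reduced) singular value decomposition of the real `n × m` matrix `B`. -/
def IsSVD {n m k : ℕ} (B : Matrix (Fin n) (Fin m) ℝ) (U : Matrix (Fin n) (Fin k) ℝ)
    (σ : Fin k → ℝ) (V : Matrix (Fin m) (Fin k) ℝ) : Prop :=
  Uᵀ * U = 1 ∧ Vᵀ * V = 1 ∧ Antitone σ ∧ (∀ i, 0 ≤ σ i) ∧ B = U * diagonal σ * Vᵀ

/-- A threshold function `Θ(t; λ)`. -/
def IsThresholdFunction (Θ : ℝ → ℝ → ℝ) : Prop :=
  ∀ lam : ℝ, 0 ≤ lam →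
    (∀ t : ℝ, Θ (-t) lam = -Θ t lam) ∧
    (Monotone fun t => Θ t lam) ∧
    Filter.Tendsto (fun t => Θ t lam) Filter.atTop Filter.atTop ∧
    (∀ t : ℝ, 0 ≤ t → 0 ≤ Θ t lam ∧ Θ t lam ≤ t)

/-!
Write `Y = U diag σ Vᵀ`, `B = U_B diag τ V_Bᵀ` and `M = (Uᵀ U_B) ⊙ (Vᵀ V_B)`. Then
`F(B) = ∑ᵢ ((σᵢ - τᵢ)²/2 + P τᵢ) + ⟨σ, (1 - M) τ⟩`.

The last term is nonnegative (von Neumann's trace inequality): rows and columns of `M` have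
squared norm at most `1`, so each top-left corner sum of `M` is at most that of `1`, and Abel
summation writes `⟨c, (1 - M) d⟩`, for antitone nonnegative `c` and `d`, as a nonnegative
combination of the differences of these corner sums.

Each summand of the first term is minimised exactly at `τᵢ = Θ σᵢ`: by (constrP) its excess over
the minimum is `∫_{Θ σᵢ}^{τᵢ} (Θ⁻¹ u - σᵢ) du + q τᵢ` with `Θ⁻¹ u = sup {s | Θ s ≤ u}`, and
continuity of `Θ` at `σᵢ` makes the integrand positive beyond `Θ σᵢ` and negative before it.

Hence a minimiser has `τ = θ := Θ ∘ σ` and `⟨σ, (1 - M) θ⟩ = 0`. Since `θ` is a function of `σ`,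
`(K + 1) σ - θ` is antitone and nonnegative for large `K`, so also `⟨θ, (1 - M) θ⟩ = 0`, which says
`‖B - Θ^σ(Y)‖_F² = 0`.
-/

open Filter Finset intervalIntegral

section Scalar

variable {f : ℝ → ℝ} {t : ℝ}

theorem bddAbove_setOf_le_of_tendsto (htop : Tendsto f atTop atTop) (u : ℝ) :
    BddAbove {s | f s ≤ u} := by
  obtain ⟨M, hM⟩ := (htop.eventually_gt_atTop u).exists_forall_of_atTop
  exact ⟨M, fun s hs => not_lt.mp fun hMs => (hM s hMs.le).not_ge hs⟩

theorem lt_sSup_setOf_le {u : ℝ} (htop : Tendsto f atTop atTop) (hcont : ContinuousAt f t)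
    (h : f t < u) : t < sSup {s | f s ≤ u} := by
  obtain ⟨x, hxt, hx⟩ := (hcont.eventually (gt_mem_nhds h)).exists_gt
  exact hxt.trans_le (le_csSup (bddAbove_setOf_le_of_tendsto htop u) hx.le)

theorem sSup_setOf_le_lt {u : ℝ} (hmono : Monotone f) (hcont : ContinuousAt f t)
    (hne : {s | f s ≤ u}.Nonempty) (h : u < f t) : sSup {s | f s ≤ u} < t := by
  obtain ⟨x, hxt, hx⟩ := (hcont.eventually (lt_mem_nhds h)).exists_lt
  exact (csSup_le hne fun s hs => (hmono.reflect_lt (lt_of_le_of_lt hs hx)).le).trans_lt hxt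

theorem intervalIntegrable_sSup_setOf_le (htop : Tendsto f atTop atTop) (hf0 : f 0 = 0)
    {a b : ℝ} (ha : 0 ≤ a) (hb : 0 ≤ b) :
    IntervalIntegrable (fun u => sSup {s | f s ≤ u}) MeasureTheory.volume a b := by
  refine MonotoneOn.intervalIntegrable fun u hu v _ huv => ?_
  have hu0 : 0 ≤ u := le_trans (le_min ha hb) hu.1
  exact csSup_le_csSup (bddAbove_setOf_le_of_tendsto htop v) ⟨0, by simpa [hf0] using hu0⟩
    fun s hs => le_trans hs huv

theorem sq_add_penalty_sub_eq {P q : ℝ → ℝ} (htop : Tendsto f atTop atTop) (hf0 : f 0 = 0)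
    (hP : ∀ θ, P θ - P 0 = (∫ u in (0:ℝ)..|θ|, (sSup {s | f s ≤ u} - u)) + q θ)
    (hqt : q (f t) = 0) (ht : 0 ≤ f t) {s : ℝ} (hs : 0 ≤ s) :
    ((t - s) ^ 2 / 2 + P s) - ((t - f t) ^ 2 / 2 + P (f t)) =
      (∫ u in f t..s, (sSup {x | f x ≤ u} - t)) + q s := by
  have hint : ∀ {b}, 0 ≤ b →
      IntervalIntegrable (fun u => sSup {x | f x ≤ u} - u) MeasureTheory.volume 0 b :=
    fun hb => (intervalIntegrable_sSup_setOf_le htop hf0 le_rfl hb).sub intervalIntegrable_id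
  have hPs := hP s
  have hPt := hP (f t)
  rw [abs_of_nonneg hs] at hPs
  rw [abs_of_nonneg ht] at hPt
  have hsplit : (∫ u in f t..s, (sSup {x | f x ≤ u} - t)) =
      (∫ u in f t..s, (sSup {x | f x ≤ u} - u)) + ∫ u in f t..s, (u - t) := by
    rw [← integral_add]
    · simp only [sub_add_sub_cancel]
    · exact (intervalIntegrable_sSup_setOf_le htop hf0 ht hs).sub intervalIntegrable_id
    · exact intervalIntegrable_id.sub intervalIntegrable_const
  rw [hsplit, ← integral_interval_sub_left (hint hs) (hint ht),
    integral_sub intervalIntegrable_id intervalIntegrable_const, integral_id,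
    integral_const, smul_eq_mul]
  linarith

theorem integral_sSup_setOf_le_sub_pos (hmono : Monotone f) (htop : Tendsto f atTop atTop)
    (hf0 : f 0 = 0) (hcont : ContinuousAt f t) (ht : 0 ≤ f t) {s : ℝ} (hs : 0 ≤ s)
    (hst : s ≠ f t) : 0 < ∫ u in f t..s, (sSup {x | f x ≤ u} - t) := by
  have hint := (intervalIntegrable_sSup_setOf_le htop hf0 ht hs).sub
    (intervalIntegrable_const (c := t))
  rcases hst.lt_or_gt with h | h
  · rw [integral_symm, ← integral_neg]
    refine intervalIntegral_pos_of_pos_on hint.symm.neg (fun u hu => ?_) h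
    have hne : {x | f x ≤ u}.Nonempty := ⟨0, by simpa [hf0] using hs.trans hu.1.le⟩
    linarith [sSup_setOf_le_lt hmono hcont hne hu.2]
  · exact intervalIntegral_pos_of_pos_on hint
      (fun u hu => sub_pos.mpr (lt_sSup_setOf_le htop hcont hu.1)) h

theorem sq_add_penalty_lt {P q : ℝ → ℝ} (hmono : Monotone f) (htop : Tendsto f atTop atTop)
    (hf0 : f 0 = 0)
    (hP : ∀ θ, P θ - P 0 = (∫ u in (0:ℝ)..|θ|, (sSup {s | f s ≤ u} - u)) + q θ)
    (hcont : ContinuousAt f t) (ht : 0 ≤ f t) (hqt : q (f t) = 0) {s : ℝ} (hs : 0 ≤ s)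
    (hqs : 0 ≤ q s) (hst : s ≠ f t) :
    (t - f t) ^ 2 / 2 + P (f t) < (t - s) ^ 2 / 2 + P s := by
  linarith [sq_add_penalty_sub_eq htop hf0 hP hqt ht hs,
    integral_sSup_setOf_le_sub_pos hmono htop hf0 hcont ht hs hst]

end Scalar

section CornerSum

theorem Antitone.exists_nonneg_eq_sum_Ici : ∀ {k : ℕ} {c : Fin k → ℝ}, Antitone c → 0 ≤ c →
    ∃ w : Fin k → ℝ, 0 ≤ w ∧ ∀ i, c i = ∑ p ∈ Ici i, w p
  | 0, _, _, _ => ⟨0, le_rfl, fun i => i.elim0⟩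
  | k + 1, c, hc, hc0 => by
    obtain ⟨w, hw0, hw⟩ := Antitone.exists_nonneg_eq_sum_Ici
      (c := fun i => c i.castSucc - c (Fin.last k))
      (fun i j hij => by simpa using hc (Fin.castSucc_le_castSucc_iff.mpr hij))
      (fun i => sub_nonneg.mpr (hc (Fin.le_last _)))
    refine ⟨Fin.snoc w (c (Fin.last k)), fun p => ?_, fun i => ?_⟩
    · exact Fin.lastCases (by simpa using hc0 _) (fun p => by simpa using hw0 p) p
    · rw [← filter_le_eq_Ici, sum_filter, Fin.sum_univ_castSucc]
      refine Fin.lastCases ?_ (fun i => ?_) i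
      · simp
      · simp [← sum_filter, filter_le_eq_Ici, ← hw, Fin.le_last]

variable {k : ℕ}

def cornerSum (N : Matrix (Fin k) (Fin k) ℝ) (p q : Fin k) : ℝ :=
  ∑ i ∈ Iic p, ∑ j ∈ Iic q, N i j

theorem sum_mul_eq_sum_mul_sum_Iic {c w : Fin k → ℝ} (hc : ∀ i, c i = ∑ p ∈ Ici i, w p)
    (g : Fin k → ℝ) : ∑ i, c i * g i = ∑ p, w p * ∑ i ∈ Iic p, g i := by
  simp only [hc, sum_mul, mul_sum]
  exact sum_comm' fun i p => by simp

theorem dotProduct_mulVec_eq_sum_cornerSum (N : Matrix (Fin k) (Fin k) ℝ) {c d w v : Fin k → ℝ}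
    (hc : ∀ i, c i = ∑ p ∈ Ici i, w p) (hd : ∀ j, d j = ∑ q ∈ Ici j, v q) :
    c ⬝ᵥ (N *ᵥ d) = ∑ p, ∑ q, w p * v q * cornerSum N p q := by
  have hNd : ∀ i, (N *ᵥ d) i = ∑ q, v q * ∑ j ∈ Iic q, N i j := fun i => by
    simp only [mulVec, dotProduct, mul_comm (N i _), sum_mul_eq_sum_mul_sum_Iic hd]
  rw [dotProduct, sum_mul_eq_sum_mul_sum_Iic hc]
  simp only [hNd, cornerSum, mul_sum]
  refine sum_congr rfl fun p _ => ?_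
  rw [sum_comm]
  simp only [mul_assoc]

theorem dotProduct_mulVec_nonneg_of_cornerSum_nonneg {N : Matrix (Fin k) (Fin k) ℝ}
    (hN : ∀ p q, 0 ≤ cornerSum N p q) {c d : Fin k → ℝ} (hc : Antitone c) (hc0 : 0 ≤ c)
    (hd : Antitone d) (hd0 : 0 ≤ d) : 0 ≤ c ⬝ᵥ (N *ᵥ d) := by
  obtain ⟨w, hw0, hw⟩ := hc.exists_nonneg_eq_sum_Ici hc0
  obtain ⟨v, hv0, hv⟩ := hd.exists_nonneg_eq_sum_Ici hd0
  rw [dotProduct_mulVec_eq_sum_cornerSum N hw hv]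
  exact sum_nonneg fun p _ => sum_nonneg fun q _ =>
    mul_nonneg (mul_nonneg (hw0 p) (hv0 q)) (hN p q)

theorem cornerSum_transpose (N : Matrix (Fin k) (Fin k) ℝ) (p q : Fin k) :
    cornerSum Nᵀ q p = cornerSum N p q :=
  sum_comm

theorem cornerSum_sub (M N : Matrix (Fin k) (Fin k) ℝ) (p q : Fin k) :
    cornerSum (M - N) p q = cornerSum M p q - cornerSum N p q := by
  simp only [cornerSum, Matrix.sub_apply, sum_sub_distrib]

theorem cornerSum_hadamard_le_of_le {X Z : Matrix (Fin k) (Fin k) ℝ}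
    (hX : ∀ i, ∑ j, X i j ^ 2 ≤ 1) (hZ : ∀ i, ∑ j, Z i j ^ 2 ≤ 1) {p q : Fin k} (hpq : p ≤ q) :
    cornerSum (X ⊙ Z) p q ≤ cornerSum 1 p q := by
  have hrow : ∀ i, ∑ j ∈ Iic q, X i j * Z i j ≤ 1 := fun i => calc
    _ ≤ ∑ j ∈ Iic q, (X i j ^ 2 + Z i j ^ 2) / 2 :=
      sum_le_sum fun j _ => by nlinarith [sq_nonneg (X i j - Z i j)]
    _ ≤ ∑ j, (X i j ^ 2 + Z i j ^ 2) / 2 :=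
      sum_le_sum_of_subset_of_nonneg (subset_univ _) fun _ _ _ => by positivity
    _ ≤ 1 := by rw [← sum_div, sum_add_distrib]; linarith [hX i, hZ i]
  have hone : ∀ i ∈ Iic p, ∑ j ∈ Iic q, (1 : Matrix (Fin k) (Fin k) ℝ) i j = 1 := fun i hi => by
    simp [one_apply, (mem_Iic.mp hi).trans hpq]
  rw [cornerSum, cornerSum, sum_congr rfl hone]
  exact sum_le_sum fun i _ => hrow i

theorem cornerSum_hadamard_le {X Z : Matrix (Fin k) (Fin k) ℝ}
    (hXr : ∀ i, ∑ j, X i j ^ 2 ≤ 1) (hXc : ∀ j, ∑ i, X i j ^ 2 ≤ 1)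
    (hZr : ∀ i, ∑ j, Z i j ^ 2 ≤ 1) (hZc : ∀ j, ∑ i, Z i j ^ 2 ≤ 1) (p q : Fin k) :
    cornerSum (X ⊙ Z) p q ≤ cornerSum 1 p q := by
  rcases le_total p q with hpq | hqp
  · exact cornerSum_hadamard_le_of_le hXr hZr hpq
  · rw [← cornerSum_transpose, ← cornerSum_transpose 1, transpose_hadamard, transpose_one]
    exact cornerSum_hadamard_le_of_le hXc hZc hqp

end CornerSum

section SVD

variable {n m k : ℕ}

theorem sum_sq_row_transpose_mul_le_one {U W : Matrix (Fin n) (Fin k) ℝ} (hU : Uᵀ * U = 1)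
    (hW : Wᵀ * W = 1) (i : Fin k) : ∑ j, (Uᵀ * W) i j ^ 2 ≤ 1 := by
  -- `E = 1 - W Wᵀ` is an orthogonal projection, so `Uᵀ W Wᵀ U = 1 - (E U)ᵀ (E U) ≤ 1`.
  set E := 1 - W * Wᵀ
  have hE : Eᵀ * E = E := by
    simp only [E, transpose_sub, transpose_one, transpose_mul, transpose_transpose, sub_mul,
      mul_sub, Matrix.one_mul, Matrix.mul_one, Matrix.mul_assoc, ← Matrix.mul_assoc Wᵀ W, hW]
    abel
  have hsplit : (Uᵀ * W) * (Uᵀ * W)ᵀ + (E * U)ᵀ * (E * U) = 1 := by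
    calc _ = Uᵀ * (W * Wᵀ + Eᵀ * E) * U := by
          simp only [transpose_mul, transpose_transpose, Matrix.mul_add, Matrix.add_mul,
            Matrix.mul_assoc]
      _ = 1 := by rw [hE, add_sub_cancel, Matrix.mul_one, hU]
  have hii := congrFun (congrFun hsplit i) i
  rw [Matrix.add_apply, mul_apply, mul_apply, one_apply_eq] at hii
  simp only [transpose_apply] at hii
  have : 0 ≤ ∑ l, (E * U) l i * (E * U) l i := sum_nonneg fun l _ => mul_self_nonneg _
  simp only [sq]
  linarith

theorem sum_sq_col_transpose_mul_le_one {U W : Matrix (Fin n) (Fin k) ℝ} (hU : Uᵀ * U = 1)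
    (hW : Wᵀ * W = 1) (j : Fin k) : ∑ i, (Uᵀ * W) i j ^ 2 ≤ 1 := by
  have h := sum_sq_row_transpose_mul_le_one hW hU j
  rwa [← transpose_transpose U, ← transpose_mul] at h

theorem frobSq_eq_trace (A : Matrix (Fin n) (Fin m) ℝ) : frobSq A = (Aᵀ * A).trace := by
  simp only [frobSq, trace, Matrix.diag, mul_apply, transpose_apply, sq]
  exact sum_comm

theorem frobSq_sub (A B : Matrix (Fin n) (Fin m) ℝ) :
    frobSq (A - B) = frobSq A - 2 * (Aᵀ * B).trace + frobSq B := by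
  rw [frobSq_eq_trace, frobSq_eq_trace, frobSq_eq_trace, transpose_sub, Matrix.sub_mul,
    Matrix.mul_sub, Matrix.mul_sub, trace_sub, trace_sub, trace_sub, ← trace_transpose (Bᵀ * A),
    transpose_mul, transpose_transpose]
  ring

theorem trace_transpose_mul_svd (U W : Matrix (Fin n) (Fin k) ℝ) (V Z : Matrix (Fin m) (Fin k) ℝ)
    (c d : Fin k → ℝ) :
    ((U * diagonal c * Vᵀ)ᵀ * (W * diagonal d * Zᵀ)).trace =
      c ⬝ᵥ (((Uᵀ * W) ⊙ (Vᵀ * Z)) *ᵥ d) := by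
  rw [dotProduct_mulVec, dotProduct_vecMul_hadamard]
  simp only [transpose_mul, transpose_transpose, diagonal_transpose, Matrix.mul_assoc]
  rw [trace_mul_comm]
  simp only [Matrix.mul_assoc]

theorem eq_zero_of_frobSq_eq_zero {A : Matrix (Fin n) (Fin m) ℝ} (h : frobSq A = 0) : A = 0 := by
  ext i j
  have hrow := (sum_eq_zero_iff_of_nonneg fun i _ => sum_nonneg fun j _ => sq_nonneg (A i j)).mp
    h i (mem_univ i)
  exact pow_eq_zero_iff two_ne_zero |>.mp
    ((sum_eq_zero_iff_of_nonneg fun j _ => sq_nonneg (A i j)).mp hrow j (mem_univ j))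

theorem frobSq_svd_sub_svd {U W : Matrix (Fin n) (Fin k) ℝ} {V Z : Matrix (Fin m) (Fin k) ℝ}
    (hU : Uᵀ * U = 1) (hV : Vᵀ * V = 1) (hW : Wᵀ * W = 1) (hZ : Zᵀ * Z = 1) (c d : Fin k → ℝ) :
    frobSq (U * diagonal c * Vᵀ - W * diagonal d * Zᵀ) =
      ∑ i, (c i - d i) ^ 2 + 2 * (c ⬝ᵥ ((1 - (Uᵀ * W) ⊙ (Vᵀ * Z)) *ᵥ d)) := by
  rw [frobSq_sub, frobSq_eq_trace, frobSq_eq_trace, trace_transpose_mul_svd,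
    trace_transpose_mul_svd, trace_transpose_mul_svd, hU, hV, hW, hZ, one_hadamard, diag_one,
    diagonal_one']
  have hsq : ∑ i, (c i - d i) ^ 2 = c ⬝ᵥ c - 2 * (c ⬝ᵥ d) + d ⬝ᵥ d := by
    rw [dotProduct, dotProduct, dotProduct, mul_sum, ← sum_sub_distrib, ← sum_add_distrib]
    exact sum_congr rfl fun i _ => by ring
  simp only [hsq, sub_mulVec, one_mulVec, dotProduct_sub]
  ring

theorem frobSq_svd_sub_svd_self {U : Matrix (Fin n) (Fin k) ℝ} {V : Matrix (Fin m) (Fin k) ℝ}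
    (hU : Uᵀ * U = 1) (hV : Vᵀ * V = 1) (c d : Fin k → ℝ) :
    frobSq (U * diagonal c * Vᵀ - U * diagonal d * Vᵀ) = ∑ i, (c i - d i) ^ 2 := by
  rw [frobSq_svd_sub_svd hU hV hU hV, hU, hV, one_hadamard, diag_one, diagonal_one', sub_self,
    zero_mulVec, dotProduct_zero, mul_zero, add_zero]

/-- von Neumann's trace inequality `tr (Yᵀ B) ≤ ∑ᵢ σᵢ(Y) σᵢ(B)`, in the coordinates of
`trace_transpose_mul_svd`. -/
theorem dotProduct_one_sub_hadamard_mulVec_nonneg {U W : Matrix (Fin n) (Fin k) ℝ}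
    {V Z : Matrix (Fin m) (Fin k) ℝ} (hU : Uᵀ * U = 1) (hW : Wᵀ * W = 1) (hV : Vᵀ * V = 1)
    (hZ : Zᵀ * Z = 1) {c d : Fin k → ℝ} (hc : Antitone c) (hc0 : 0 ≤ c) (hd : Antitone d)
    (hd0 : 0 ≤ d) : 0 ≤ c ⬝ᵥ ((1 - (Uᵀ * W) ⊙ (Vᵀ * Z)) *ᵥ d) := by
  refine dotProduct_mulVec_nonneg_of_cornerSum_nonneg (fun p q => ?_) hc hc0 hd hd0
  rw [cornerSum_sub, sub_nonneg]
  exact cornerSum_hadamard_le (sum_sq_row_transpose_mul_le_one hU hW)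
    (sum_sq_col_transpose_mul_le_one hU hW) (sum_sq_row_transpose_mul_le_one hV hZ)
    (sum_sq_col_transpose_mul_le_one hV hZ) p q

end SVD

section Cone

variable {ι : Type*} [Fintype ι]

theorem exists_abs_sub_le_mul_abs_sub {σ θ : ι → ℝ} (h : ∀ i j, σ i = σ j → θ i = θ j) :
    ∃ K, 0 ≤ K ∧ ∀ i j, |θ i - θ j| ≤ K * |σ i - σ j| := by
  refine ⟨∑ i, ∑ j, |θ i - θ j| / |σ i - σ j|, by positivity, fun i j => ?_⟩
  by_cases hij : σ i = σ j
  · simp [hij, h i j hij]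
  · have hle : |θ i - θ j| / |σ i - σ j| ≤ ∑ i, ∑ j, |θ i - θ j| / |σ i - σ j| :=
      (single_le_sum (f := fun j => |θ i - θ j| / |σ i - σ j|) (fun _ _ => by positivity)
        (mem_univ j)).trans
      (single_le_sum (f := fun i => ∑ j, |θ i - θ j| / |σ i - σ j|)
        (fun _ _ => sum_nonneg fun _ _ => by positivity) (mem_univ i))
    rwa [div_le_iff₀ (abs_pos.mpr (sub_ne_zero.mpr hij))] at hle

theorem eq_and_eq_zero_of_sum_add_le {g : ι → ℝ → ℝ} {a b : ι → ℝ} {e : ℝ}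
    (hg : ∀ i, b i ≠ a i → g i (a i) < g i (b i)) (he : 0 ≤ e)
    (h : ∑ i, g i (b i) + e ≤ ∑ i, g i (a i)) : b = a ∧ e = 0 := by
  have hle : ∀ i ∈ univ, g i (a i) ≤ g i (b i) := fun i _ =>
    (eq_or_ne (b i) (a i)).elim (fun hi => by rw [hi]) fun hi => (hg i hi).le
  obtain rfl : b = a := by
    by_contra hne
    obtain ⟨i, hi⟩ := Function.ne_iff.mp hne
    linarith [sum_lt_sum hle ⟨i, mem_univ i, hg i hi⟩]
  exact ⟨rfl, by linarith⟩

theorem dotProduct_mulVec_self_eq_zero_of_eq_zero [Preorder ι] {N : Matrix ι ι ℝ}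
    (hN : ∀ c d : ι → ℝ, Antitone c → 0 ≤ c → Antitone d → 0 ≤ d → 0 ≤ c ⬝ᵥ (N *ᵥ d))
    {σ θ : ι → ℝ} (hσ : Antitone σ) (hθ : Antitone θ) (hθ0 : 0 ≤ θ) (hθσ : θ ≤ σ)
    (hσθ : ∀ i j, σ i = σ j → θ i = θ j) (h : σ ⬝ᵥ (N *ᵥ θ) = 0) : θ ⬝ᵥ (N *ᵥ θ) = 0 := by
  obtain ⟨K, hK0, hK⟩ := exists_abs_sub_le_mul_abs_sub hσθ
  have hc : Antitone ((K + 1) • σ - θ) := fun i j hij => by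
    have hσij := hσ hij
    have := (le_abs_self _).trans (hK i j)
    rw [abs_of_nonneg (sub_nonneg.mpr hσij)] at this
    simp only [Pi.sub_apply, Pi.smul_apply, smul_eq_mul]
    nlinarith
  have hc0 : 0 ≤ (K + 1) • σ - θ := fun i => by
    have : 0 ≤ σ i := (hθ0 i).trans (hθσ i)
    simp only [Pi.zero_apply, Pi.sub_apply, Pi.smul_apply, smul_eq_mul]
    nlinarith [hθσ i]
  have h1 := hN _ _ hc hc0 hθ hθ0
  have h2 := hN _ _ hθ hθ0 hθ hθ0
  rw [sub_dotProduct, smul_dotProduct, h, smul_zero, zero_sub, neg_nonneg] at h1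
  exact le_antisymm h1 h2

end Cone

/-- Uniqueness: under the hypotheses of the matrix-thresholding optimality result, the
matrix thresholding `B̂ = Θ^σ(Y;λ) = U diag(Θ(σ_i;λ)) Vᵀ` is the UNIQUE global minimizer of
`F(B) = ‖Y−B‖_F²/2 + ∑_i P(σ_i(B);λ)`: any matrix `B` (with singular values `σB` coming
from an SVD of `B`) whose objective value is no larger than that of every matrix must
coincide with `B̂`. -/
theorem matrix_thresholding_unique_minimizer {n m : ℕ}
    (Θ : ℝ → ℝ → ℝ) (hΘ : IsThresholdFunction Θ) (lam : ℝ) (hlam : 0 ≤ lam)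
    (P q : ℝ → ℝ)
    (hq : ∀ θ : ℝ, 0 ≤ q θ) (hqΘ : ∀ t : ℝ, q (Θ t lam) = 0)
    (hP : ∀ θ : ℝ,
      P θ - P 0 = (∫ u in (0:ℝ)..|θ|, (sSup {s : ℝ | Θ s lam ≤ u} - u)) + q θ)
    (Y : Matrix (Fin n) (Fin m) ℝ)
    (U : Matrix (Fin n) (Fin (min n m)) ℝ) (σ : Fin (min n m) → ℝ)
    (V : Matrix (Fin m) (Fin (min n m)) ℝ)
    (hY : IsSVD Y U σ V)
    (hcont : ∀ i, ContinuousAt (fun s => Θ s lam) (σ i))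
    (B : Matrix (Fin n) (Fin m) ℝ)
    (UB : Matrix (Fin n) (Fin (min n m)) ℝ) (σB : Fin (min n m) → ℝ)
    (VB : Matrix (Fin m) (Fin (min n m)) ℝ)
    (hB : IsSVD B UB σB VB)
    (hmin : ∀ (B' : Matrix (Fin n) (Fin m) ℝ)
      (UB' : Matrix (Fin n) (Fin (min n m)) ℝ) (σB' : Fin (min n m) → ℝ)
      (VB' : Matrix (Fin m) (Fin (min n m)) ℝ), IsSVD B' UB' σB' VB' →
      frobSq (Y - B) / 2 + ∑ i, P (σB i) ≤ frobSq (Y - B') / 2 + ∑ i, P (σB' i)) :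
    B = U * diagonal (fun i => Θ (σ i) lam) * Vᵀ := by
  obtain ⟨hodd, hmono, htop, hbdd⟩ := hΘ lam hlam
  have h0 : Θ 0 lam = 0 := self_eq_neg.mp (by simpa using hodd 0)
  obtain ⟨hU, hV, hσ, hσ0, rfl⟩ := hY
  obtain ⟨hUB, hVB, hσB, hσB0, rfl⟩ := hB
  set θ : Fin (min n m) → ℝ := fun i => Θ (σ i) lam
  have hθ : Antitone θ := fun i j hij => hmono (hσ hij)
  have hθ0 : 0 ≤ θ := fun i => (hbdd _ (hσ0 i)).1
  have hθσ : θ ≤ σ := fun i => (hbdd _ (hσ0 i)).2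
  set N := 1 - (Uᵀ * UB) ⊙ (Vᵀ * VB)
  have hN : ∀ c d : Fin (min n m) → ℝ, Antitone c → 0 ≤ c → Antitone d → 0 ≤ d →
      0 ≤ c ⬝ᵥ (N *ᵥ d) := fun _ _ => dotProduct_one_sub_hadamard_mulVec_nonneg hU hUB hV hVB
  have hle : ∑ i, ((σ i - σB i) ^ 2 / 2 + P (σB i)) + σ ⬝ᵥ (N *ᵥ σB) ≤
      ∑ i, ((σ i - θ i) ^ 2 / 2 + P (θ i)) := by
    have h := hmin _ U θ V ⟨hU, hV, hθ, hθ0, rfl⟩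
    rw [frobSq_svd_sub_svd hU hV hUB hVB, frobSq_svd_sub_svd_self hU hV] at h
    simp only [sum_add_distrib, ← sum_div]
    linarith
  obtain ⟨rfl, hgap⟩ := eq_and_eq_zero_of_sum_add_le (g := fun i s => (σ i - s) ^ 2 / 2 + P s)
    (fun i hi => sq_add_penalty_lt hmono htop h0 hP (hcont i) (hθ0 i) (hqΘ _) (hσB0 i) (hq _) hi)
    (hN σ σB hσ hσ0 hσB hσB0) hle
  have hθθ := dotProduct_mulVec_self_eq_zero_of_eq_zero hN hσ hθ hθ0 hθσ
    (fun i j h => by simp only [θ, h]) hgap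
  refine (sub_eq_zero.mp (eq_zero_of_frobSq_eq_zero ?_)).symm
  rw [frobSq_svd_sub_svd hU hV hUB hVB, hθθ]
  simp [θ]
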